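/- arXiv:1701.07137 — 3 statements merged into one kernel-verified Lean document; each statement's English description precedes it below -/
import Mathlib

section
/- Let T be a finite tree with at least three vertices such that for every path (v_0, v_1, …, v_k) between two leaves v_0 and v_k, the sum of the degrees of the interior vertices v_1, …, v_{k−1} is at most M. Then the number of leaves of T is at most e^(M/e). -/
/-!
Fix a leaf `a` with neighbour `v`. Walk from `v` towards a leaf, at each vertex `w` stepping into
the branch that contains the most leaves; there are `deg w - 1` branches to choose from, so the
leaves beyond `a` number at most `∏ (deg w - 1)` over the visited non-leaf vertices. Together
with `a` this gives a leaf-to-leaf path whose interior degrees satisfy `#leaves ≤ ∏ deg w`, and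
`x ≤ e^(x/e)` turns the product into `e^(∑ deg w / e) ≤ e^(M/e)`.
-/

open SimpleGraph Finset

theorem Finset.prod_tsub_one_lt_prod {ι : Type*} {s : Finset ι} {f : ι → ℕ} (hs : s.Nonempty)
    (hf : ∀ i ∈ s, 0 < f i) : ∏ i ∈ s, (f i - 1) < ∏ i ∈ s, f i := by
  by_cases h : ∀ i ∈ s, 1 < f i
  · exact prod_lt_prod_of_nonempty (fun i hi => Nat.sub_pos_of_lt (h i hi))
      (fun i hi => Nat.sub_lt (hf i hi) one_pos) hs
  · obtain ⟨i, hi, hfi⟩ : ∃ i ∈ s, f i ≤ 1 := by simpa using h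
    rw [prod_eq_zero hi (by omega)]
    exact prod_pos hf

theorem Real.le_exp_div_exp_one (x : ℝ) : x ≤ Real.exp (x / Real.exp 1) := by
  simpa [mul_div_cancel₀ x (Real.exp_pos 1).ne'] using
    Real.exp_one_mul_le_exp (x := x / Real.exp 1)

theorem Real.prod_le_exp_sum_div_exp_one {ι : Type*} (s : Finset ι) {f : ι → ℝ}
    (hf : ∀ i ∈ s, 0 ≤ f i) : ∏ i ∈ s, f i ≤ Real.exp ((∑ i ∈ s, f i) / Real.exp 1) := by
  rw [sum_div, Real.exp_sum]
  exact prod_le_prod hf fun i _ => Real.le_exp_div_exp_one (f i)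

namespace SimpleGraph

variable {V : Type*} {G : SimpleGraph V}

/-- For an edge `uv` of a tree, the vertices on `v`'s side of it. -/
def branch (G : SimpleGraph V) (u v : V) : Set V :=
  {x | ∃ p : G.Walk v x, p.IsPath ∧ u ∉ p.support}

theorem mem_branch_of_mem_support {u v x y : V} {p : G.Walk v x} (hp : p.IsPath)
    (hu : u ∉ p.support) (hy : y ∈ p.support) : y ∈ G.branch u v := by
  classical
  exact ⟨p.takeUntil y hy, hp.takeUntil _, fun h => hu (p.support_takeUntil_subset_support hy h)⟩

theorem mem_branch_self {u v : V} (h : u ≠ v) : v ∈ G.branch u v :=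
  ⟨.nil, .nil, by simpa using h⟩

theorem notMem_branch_left {u v : V} : u ∉ G.branch u v :=
  fun ⟨p, _, hu⟩ => hu p.end_mem_support

theorem exists_adj_mem_branch {u v x : V} (hx : x ∈ G.branch u v) (hxv : x ≠ v) :
    ∃ w, G.Adj v w ∧ w ≠ u ∧ x ∈ G.branch v w := by
  obtain ⟨p, hp, hu⟩ := hx
  cases p with
  | nil => exact absurd rfl hxv
  | @cons _ w _ hvw q =>
    rw [Walk.cons_isPath_iff] at hp
    rw [Walk.support_cons, List.mem_cons, not_or] at hu
    exact ⟨w, hvw, fun h => hu.2 (h ▸ q.start_mem_support), q, hp⟩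

theorem branch_subset_singleton {u v : V} [Fintype (G.neighborSet v)] (huv : G.Adj u v)
    (hv : G.degree v = 1) : G.branch u v ⊆ {v} := by
  intro x hx
  by_contra hxv
  obtain ⟨w, hvw, hwu, -⟩ := exists_adj_mem_branch hx hxv
  obtain ⟨z, -, hz⟩ := degree_eq_one_iff_existsUnique_adj.mp hv
  exact hwu ((hz w hvw).trans (hz u huv.symm).symm)

theorem Connected.mem_branch_of_degree_eq_one (hG : G.Connected) {a v x : V}
    [Fintype (G.neighborSet a)] (ha : G.degree a = 1) (hav : G.Adj a v) (hx : x ≠ a) :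
    x ∈ G.branch a v := by
  obtain ⟨p, hp⟩ := hG.exists_isPath a x
  cases p with
  | nil => exact absurd rfl hx
  | @cons _ w _ haw q =>
    obtain ⟨z, -, hz⟩ := degree_eq_one_iff_existsUnique_adj.mp ha
    obtain rfl : w = v := (hz w haw).trans (hz v hav).symm
    rw [Walk.cons_isPath_iff] at hp
    exact ⟨q, hp⟩

theorem Connected.card_le_two_of_degree_eq_one [Fintype V] [DecidableRel G.Adj]
    (hG : G.Connected) {a v : V} (hav : G.Adj a v) (ha : G.degree a = 1)
    (hv : G.degree v = 1) : Fintype.card V ≤ 2 := by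
  classical
  have : (univ : Finset V) ⊆ {a, v} := fun x _ => by
    by_cases hx : x = a
    · simp [hx]
    · have := branch_subset_singleton hav hv (hG.mem_branch_of_degree_eq_one ha hav hx)
      simp_all
  simpa using (card_le_card this).trans card_le_two

theorem IsAcyclic.notMem_branch {u v w : V} (hG : G.IsAcyclic) (huv : G.Adj u v)
    (hvw : G.Adj v w) (hwu : w ≠ u) : u ∉ G.branch v w := by
  rintro ⟨q, hq, hv⟩
  have := hG.eq_snd_of_adj_start (hq.cons hv (h := hvw)) huv.symm (by simp)
  exact hwu (by simpa using this.symm)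

theorem IsAcyclic.branch_ssubset_branch {u v w : V} (hG : G.IsAcyclic) (huv : G.Adj u v)
    (hvw : G.Adj v w) (hwu : w ≠ u) : G.branch v w ⊂ G.branch u v := by
  refine ⟨fun x ⟨q, hq, hv⟩ => ⟨.cons hvw q, hq.cons hv, ?_⟩,
    fun h => notMem_branch_left (h (mem_branch_self huv.ne))⟩
  simpa [huv.ne] using fun hu => hG.notMem_branch huv hvw hwu (mem_branch_of_mem_support hq hv hu)

variable [Fintype V] [DecidableRel G.Adj]

noncomputable def branchLeaves (G : SimpleGraph V) [DecidableRel G.Adj] (u v : V) : Finset V :=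
  (Set.toFinite {x | x ∈ G.branch u v ∧ G.degree x = 1}).toFinset

theorem mem_branchLeaves {u v x : V} :
    x ∈ G.branchLeaves u v ↔ x ∈ G.branch u v ∧ G.degree x = 1 := by
  simp [branchLeaves]

variable [DecidableEq V]

theorem card_branchLeaves_le_mul {u v : V} {k : ℕ} (huv : G.Adj u v) (hv : G.degree v ≠ 1)
    (hk : ∀ w ∈ (G.neighborFinset v).erase u, #(G.branchLeaves v w) ≤ k) :
    #(G.branchLeaves u v) ≤ (G.degree v - 1) * k := by
  have hsub : G.branchLeaves u v ⊆ ((G.neighborFinset v).erase u).biUnion (G.branchLeaves v) := by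
    intro x hx
    obtain ⟨hxb, hx1⟩ := mem_branchLeaves.mp hx
    obtain ⟨w, hvw, hwu, hxw⟩ := exists_adj_mem_branch hxb (by rintro rfl; exact hv hx1)
    exact mem_biUnion.mpr ⟨w, by simp [hvw, hwu], mem_branchLeaves.mpr ⟨hxw, hx1⟩⟩
  calc #(G.branchLeaves u v)
      ≤ ∑ w ∈ (G.neighborFinset v).erase u, #(G.branchLeaves v w) :=
        (card_le_card hsub).trans card_biUnion_le
    _ ≤ #((G.neighborFinset v).erase u) * k := by simpa using sum_le_card_nsmul _ _ _ hk
    _ = (G.degree v - 1) * k := by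
        rw [card_erase_of_mem (by simpa using huv.symm), card_neighborFinset_eq_degree]

theorem IsAcyclic.exists_isPath_card_branchLeaves_le_prod (hG : G.IsAcyclic) {u v : V}
    (huv : G.Adj u v) :
    ∃ (l : V) (p : G.Walk v l), p.IsPath ∧ u ∉ p.support ∧ G.degree l = 1 ∧
      #(G.branchLeaves u v) ≤ ∏ w ∈ p.support.toFinset.erase l, (G.degree w - 1) := by
  induction hn : (G.branch u v).ncard using Nat.strong_induction_on generalizing u v with
  | _ n ih =>
  by_cases hv : G.degree v = 1
  · refine ⟨v, .nil, .nil, by simpa using huv.ne, hv, ?_⟩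
    have : G.branchLeaves u v ⊆ {v} := fun x hx => by
      simpa using branch_subset_singleton huv hv (mem_branchLeaves.mp hx).1
    simpa using card_le_card this
  have hne : ((G.neighborFinset v).erase u).Nonempty := by
    rw [← card_pos, card_erase_of_mem (by simpa using huv.symm), card_neighborFinset_eq_degree]
    have := G.degree_pos_iff_exists_adj v |>.mpr ⟨u, huv.symm⟩
    omega
  obtain ⟨w, hw, hmax⟩ := exists_max_image _ (fun w => #(G.branchLeaves v w)) hne
  obtain ⟨hwu, hvw⟩ : w ≠ u ∧ G.Adj v w := by simpa using hw
  obtain ⟨l, p, hp, hvp, hl, hbound⟩ :=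
    ih _ (hn ▸ Set.ncard_lt_ncard (hG.branch_ssubset_branch huv hvw hwu)) hvw rfl
  have hup : u ∉ p.support := fun hu =>
    hG.notMem_branch huv hvw hwu (mem_branch_of_mem_support hp hvp hu)
  refine ⟨l, .cons hvw p, hp.cons hvp, by simp [huv.ne, hup], hl, ?_⟩
  have hvl : v ≠ l := by rintro rfl; exact hvp p.end_mem_support
  calc #(G.branchLeaves u v) ≤ (G.degree v - 1) * #(G.branchLeaves v w) :=
        card_branchLeaves_le_mul huv hv hmax
    _ ≤ (G.degree v - 1) * ∏ x ∈ p.support.toFinset.erase l, (G.degree x - 1) := by gcongr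
    _ = _ := by
        rw [Walk.support_cons, List.toFinset_cons, erase_insert_of_ne hvl,
          prod_insert (by simp [hvp])]

theorem IsTree.exists_isPath_card_leaves_le_prod (hG : G.IsTree) (h3 : 3 ≤ Fintype.card V) :
    ∃ (a l : V) (p : G.Walk a l), p.IsPath ∧ G.degree a = 1 ∧ G.degree l = 1 ∧
      #(univ.filter fun x => G.degree x = 1) ≤ ∏ w ∈ p.support.toFinset \ {a, l}, G.degree w := by
  have : Nontrivial V := Fintype.one_lt_card_iff_nontrivial.mp (by omega)
  obtain ⟨a, ha⟩ := hG.exists_vert_degree_one_of_nontrivial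
  obtain ⟨v, hav, -⟩ := degree_eq_one_iff_existsUnique_adj.mp ha
  have hv : G.degree v ≠ 1 := fun hv => by
    have := hG.connected.card_le_two_of_degree_eq_one hav ha hv
    omega
  obtain ⟨l, p, hp, hap, hl, hbound⟩ := hG.isAcyclic.exists_isPath_card_branchLeaves_le_prod hav
  refine ⟨a, l, .cons hav p, hp.cons hap, ha, hl, ?_⟩
  have hleaves : (univ.filter fun x => G.degree x = 1) ⊆ insert a (G.branchLeaves a v) := by
    intro x hx
    by_cases hxa : x = a
    · simp [hxa]
    · exact mem_insert_of_mem <| mem_branchLeaves.mpr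
        ⟨hG.connected.mem_branch_of_degree_eq_one ha hav hxa, (mem_filter.mp hx).2⟩
  have hvl : v ≠ l := by rintro rfl; exact hv hl
  have hinterior : (Walk.cons hav p).support.toFinset \ {a, l} = p.support.toFinset.erase l := by
    ext x
    simp only [Walk.support_cons, List.toFinset_cons, mem_sdiff, mem_insert, mem_singleton,
      List.mem_toFinset, mem_erase]
    grind
  have hdeg (w : V) : 0 < G.degree w :=
    hG.connected.preconnected.minDegree_pos_of_nontrivial.trans_le (G.minDegree_le_degree w)
  calc #(univ.filter fun x => G.degree x = 1) ≤ #(G.branchLeaves a v) + 1 :=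
        (card_le_card hleaves).trans (card_insert_le _ _)
    _ ≤ ∏ w ∈ p.support.toFinset.erase l, (G.degree w - 1) + 1 := by omega
    _ ≤ ∏ w ∈ p.support.toFinset.erase l, G.degree w :=
        prod_tsub_one_lt_prod ⟨v, by simp [hvl]⟩ fun w _ => hdeg w
    _ = _ := by rw [hinterior]

end SimpleGraph

theorem stmt3_general {V : Type*} [Fintype V] [DecidableEq V] (G : SimpleGraph V)
    [DecidableRel G.Adj] (hT : G.IsTree) (h3 : 3 ≤ Fintype.card V) (M : ℝ)
    (hpaths : ∀ ⦃a b : V⦄ (p : G.Walk a b), p.IsPath → G.degree a = 1 → G.degree b = 1 →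
      ∑ v ∈ p.support.toFinset \ {a, b}, (G.degree v : ℝ) ≤ M) :
    ((Finset.univ.filter (fun v => G.degree v = 1)).card : ℝ)
      ≤ Real.exp (M / Real.exp 1) := by
  obtain ⟨a, l, p, hp, ha, hl, hcard⟩ := hT.exists_isPath_card_leaves_le_prod h3
  calc ((univ.filter fun v => G.degree v = 1).card : ℝ)
      ≤ ∏ w ∈ p.support.toFinset \ {a, l}, (G.degree w : ℝ) := by exact_mod_cast hcard
    _ ≤ Real.exp ((∑ w ∈ p.support.toFinset \ {a, l}, (G.degree w : ℝ)) / Real.exp 1) :=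
        Real.prod_le_exp_sum_div_exp_one _ fun _ _ => by positivity
    _ ≤ Real.exp (M / Real.exp 1) := by
        gcongr
        exact hpaths p hp ha hl

/-- In a finite tree with at least three vertices in which the interior degree sum of every
leaf-to-leaf path is at most `M`, the number of leaves is at most `e^(M/e)`. -/
theorem stmt3 {V : Type*} [Fintype V] [DecidableEq V] (G : SimpleGraph V)
    [DecidableRel G.Adj] (hT : G.IsTree) (h3 : 3 ≤ Fintype.card V) (M : ℝ) (hM : 0 < M)
    (hpaths : ∀ ⦃a b : V⦄ (p : G.Walk a b), p.IsPath → G.degree a = 1 → G.degree b = 1 →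
      ∑ v ∈ p.support.toFinset \ {a, b}, (G.degree v : ℝ) ≤ M) :
    ((Finset.univ.filter (fun v => G.degree v = 1)).card : ℝ)
      ≤ Real.exp (M / Real.exp 1) :=
  stmt3_general G hT h3 M hpaths
end

section
/- Let T be a finite tree with at least three vertices such that for every path connecting two leaves of T, the sum of the degrees of the interior vertices of the path is at most M. Then T has at most (M/2 + 1)·e^(M/e) vertices. -/
/-!
Root the tree at a leaf `r`. A vertex `v ≠ r` has `deg v - 1` children, its neighbours off the
path from `r` to `v`. Let `β w` (`IsTree.branching`) be the product of `deg x - 1` over the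
interior vertices `x` of the path from `r` to `w`: a descent from `r` that moves to a uniformly
random child at every step ends at the leaf `ℓ` with probability `1 / β ℓ`. Deterministically,
following at each vertex the child with the largest bound shows that the number of leaves below
`v` is at most `β ℓ / β v` for some leaf `ℓ` below `v`. Applied at the neighbour of `r`, some
leaf-to-leaf path has `L ≤ β ℓ + 1 ≤ ∏ deg x`, where `L` is the number of leaves (the interior is
nonempty once there are three vertices), and `∏ deg x ≤ ∏ exp (deg x / e) ≤ exp (M / e)` because
`t ≤ exp (t / e)`.

Every vertex is a leaf or an interior vertex of a path from `r` to a leaf, and such a path has at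
most `M / 2` interior vertices since they all have degree at least 2; hence `n ≤ L (M / 2 + 1)`.
-/

open SimpleGraph Finset

namespace Real

theorem le_exp_div_exp (x : ℝ) : x ≤ exp (x / exp 1) := by
  have h := add_one_le_exp (x / exp 1 - 1)
  rwa [sub_add_cancel, exp_sub, le_div_iff₀ (exp_pos 1), div_mul_cancel₀ _ (exp_ne_zero 1)] at h

theorem prod_le_exp_sum_div_exp {ι : Type*} {s : Finset ι} {f : ι → ℝ} (hf : ∀ i ∈ s, 0 ≤ f i) :
    ∏ i ∈ s, f i ≤ exp ((∑ i ∈ s, f i) / exp 1) := by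
  rw [sum_div, exp_sum]
  exact prod_le_prod hf fun i _ => le_exp_div_exp (f i)

end Real

namespace SimpleGraph

variable {V : Type*} {G : SimpleGraph V}

def leafFinset [Fintype V] [DecidableRel G.Adj] : Finset V := {v | G.degree v = 1}

@[simp]
theorem mem_leafFinset [Fintype V] [DecidableRel G.Adj] {v : V} :
    v ∈ G.leafFinset ↔ G.degree v = 1 := by
  simp [leafFinset]

namespace Walk

variable {a b v : V}

theorem IsPath.two_le_degree_of_mem_support [Fintype (G.neighborSet v)] {p : G.Walk a b}
    (hp : p.IsPath) (hv : v ∈ p.support) (hva : v ≠ a) (hvb : v ≠ b) : 2 ≤ G.degree v := by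
  classical
  obtain ⟨q, s, -, -, rfl⟩ := hp.mem_support_iff_exists_append.mp hv
  have hq : ¬q.Nil := not_nil_of_ne hva.symm
  have hs : ¬s.Nil := not_nil_of_ne hvb
  have hne : q.penultimate ≠ s.snd :=
    hp.ne_of_mem_support_of_append (s.adj_snd hs).ne' (q.getVert_mem_support _)
      (s.getVert_mem_support 1)
  rw [← card_neighborFinset_eq_degree, ← card_pair hne]
  exact card_le_card (by simp [insert_subset_iff, (q.adj_penultimate hq).symm, s.adj_snd hs])

variable [DecidableEq V]

def interiorVertices (p : G.Walk a b) : Finset V := p.support.toFinset \ {a, b}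

theorem mem_interiorVertices {p : G.Walk a b} :
    v ∈ p.interiorVertices ↔ v ∈ p.support ∧ v ≠ a ∧ v ≠ b := by
  simp [interiorVertices]

theorem interiorVertices_concat {c : V} {p : G.Walk a b} (h : G.Adj b c) (hc : c ∉ p.support)
    (hb : b ≠ a) : (p.concat h).interiorVertices = insert b p.interiorVertices := by
  ext x
  simp only [mem_insert, mem_interiorVertices, support_concat, List.mem_append, List.mem_singleton]
  have := p.end_mem_support
  have := h.ne
  grind

theorem IsPath.two_mul_card_interiorVertices_le [Fintype V] [DecidableRel G.Adj]
    {p : G.Walk a b} (hp : p.IsPath) :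
    2 * #p.interiorVertices ≤ ∑ x ∈ p.interiorVertices, G.degree x := by
  rw [mul_comm, ← smul_eq_mul]
  refine card_nsmul_le_sum _ _ _ fun x hx => ?_
  obtain ⟨hx, hxa, hxb⟩ := mem_interiorVertices.mp hx
  exact hp.two_le_degree_of_mem_support hx hxa hxb

theorem IsPath.prod_degree_sub_one_add_one_le [Fintype V] [DecidableRel G.Adj]
    {p : G.Walk a b} (hp : p.IsPath) (hne : p.interiorVertices.Nonempty) :
    ∏ x ∈ p.interiorVertices, (G.degree x - 1) + 1 ≤ ∏ x ∈ p.interiorVertices, G.degree x := by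
  obtain ⟨c, hc⟩ := hne
  have h2 : ∀ x ∈ p.interiorVertices, 2 ≤ G.degree x := fun x hx => by
    obtain ⟨hx, hxa, hxb⟩ := mem_interiorVertices.mp hx
    exact hp.two_le_degree_of_mem_support hx hxa hxb
  simpa using prod_add_prod_le' hc (g := fun x => G.degree x - 1) (h := fun _ => 1)
    (by have := h2 c hc; omega) (fun _ _ _ => Nat.sub_le _ _)
    fun x hx _ => one_le_two.trans (h2 x hx)

end Walk

namespace IsTree

variable (hT : G.IsTree)

noncomputable def path (u v : V) : G.Walk u v := (hT.existsUnique_path u v).exists.choose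

theorem isPath_path (u v : V) : (hT.path u v).IsPath :=
  (hT.existsUnique_path u v).exists.choose_spec

theorem eq_path {u v : V} {p : G.Walk u v} (hp : p.IsPath) : p = hT.path u v :=
  (hT.existsUnique_path u v).unique hp (hT.isPath_path u v)

variable {r u v w : V}

theorem path_eq_concat (h : G.Adj v u) (hu : u ∉ (hT.path r v).support) :
    hT.path r u = (hT.path r v).concat h :=
  (hT.eq_path ((hT.isPath_path r v).concat hu h)).symm

theorem support_path_subset [DecidableEq V] (hv : v ∈ (hT.path r w).support) :
    (hT.path r v).support ⊆ (hT.path r w).support := by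
  rw [← hT.eq_path ((hT.isPath_path r w).takeUntil hv)]
  exact Walk.support_takeUntil_subset_support _ hv

variable [Fintype V] [DecidableRel G.Adj]

theorem mem_support_path_of_degree_eq_one (hr : G.degree r = 1) (hc : G.Adj r v) (hw : w ≠ r) :
    v ∈ (hT.path r w).support := by
  have hnil : ¬(hT.path r w).Nil := Walk.not_nil_of_ne hw.symm
  have hsnd : (hT.path r w).snd = v :=
    (degree_eq_one_iff_existsUnique_adj.mp hr).unique (Walk.adj_snd hnil) hc
  exact hsnd ▸ Walk.getVert_mem_support _ _

variable [DecidableEq V]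

noncomputable def children (r v : V) : Finset V :=
  {u ∈ G.neighborFinset v | u ∉ (hT.path r v).support}

theorem mem_children : u ∈ hT.children r v ↔ G.Adj v u ∧ u ∉ (hT.path r v).support := by
  simp [children]

theorem ne_of_mem_children (hu : u ∈ hT.children r v) : u ≠ r := by
  rintro rfl
  exact (hT.mem_children.mp hu).2 (hT.path u v).start_mem_support

theorem length_path_lt_of_mem_children (hu : u ∈ hT.children r v) :
    (hT.path r v).length < (hT.path r u).length := by
  obtain ⟨h, hu⟩ := hT.mem_children.mp hu
  simp [hT.path_eq_concat h hu]

theorem card_children (hv : v ≠ r) : #(hT.children r v) = G.degree v - 1 := by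
  have hnil : ¬(hT.path r v).Nil := Walk.not_nil_of_ne hv.symm
  have hpar := (hT.path r v).adj_penultimate hnil
  have : hT.children r v = (G.neighborFinset v).erase (hT.path r v).penultimate := by
    ext u
    simp only [mem_children, mem_erase, mem_neighborFinset]
    constructor
    · rintro ⟨h, hu⟩
      exact ⟨fun he => hu (he ▸ Walk.getVert_mem_support _ _), h⟩
    · rintro ⟨hne, h⟩
      exact ⟨h, fun hu => hne (hT.isAcyclic.eq_penultimate_of_adj_end (hT.isPath_path r v) h hu)⟩
  rw [this, card_erase_of_mem (by simpa using hpar.symm), card_neighborFinset_eq_degree]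

noncomputable def leavesBelow (r v : V) : Finset V := {w ∈ G.leafFinset | v ∈ (hT.path r w).support}

theorem mem_leavesBelow : w ∈ hT.leavesBelow r v ↔ G.degree w = 1 ∧ v ∈ (hT.path r w).support := by
  simp [leavesBelow]

theorem leavesBelow_eq_singleton (hv : v ≠ r) (hleaf : G.degree v = 1) :
    hT.leavesBelow r v = {v} := by
  ext w
  simp only [mem_leavesBelow, mem_singleton]
  refine ⟨fun ⟨_, hvw⟩ => ?_, by rintro rfl; exact ⟨hleaf, Walk.end_mem_support _⟩⟩
  by_contra hwv
  have := (hT.isPath_path r w).two_le_degree_of_mem_support hvw hv (Ne.symm hwv)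
  omega

theorem leavesBelow_subset_of_mem_children (hu : u ∈ hT.children r v) :
    hT.leavesBelow r u ⊆ hT.leavesBelow r v := by
  obtain ⟨h, hu⟩ := hT.mem_children.mp hu
  have hvu : v ∈ (hT.path r u).support := by
    simp [hT.path_eq_concat h hu, Walk.support_concat]
  intro w hw
  obtain ⟨hw, huw⟩ := hT.mem_leavesBelow.mp hw
  exact hT.mem_leavesBelow.mpr ⟨hw, hT.support_path_subset huw hvu⟩

theorem leavesBelow_subset_biUnion_children (hv : G.degree v ≠ 1) :
    hT.leavesBelow r v ⊆ (hT.children r v).biUnion (hT.leavesBelow r) := by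
  intro w hw
  obtain ⟨hw, hvw⟩ := hT.mem_leavesBelow.mp hw
  obtain ⟨q, s, -, -, hqs⟩ := (hT.isPath_path r w).mem_support_iff_exists_append.mp hvw
  have hs : ¬s.Nil := Walk.not_nil_of_ne (by rintro rfl; exact hv hw)
  have hpath : (q.append s).IsPath := hqs ▸ hT.isPath_path r w
  have hq : q = hT.path r v := hT.eq_path hpath.of_append_left
  have hsnd : s.snd ∉ (hT.path r v).support := fun h =>
    hpath.ne_of_mem_support_of_append (s.adj_snd hs).ne' (hq ▸ h) (s.getVert_mem_support 1) rfl
  refine mem_biUnion.mpr ⟨s.snd, hT.mem_children.mpr ⟨s.adj_snd hs, hsnd⟩, ?_⟩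
  rw [mem_leavesBelow, hqs, Walk.mem_support_append_iff]
  exact ⟨hw, Or.inr (s.getVert_mem_support 1)⟩

noncomputable def branching (r w : V) : ℕ := ∏ x ∈ (hT.path r w).interiorVertices, (G.degree x - 1)

theorem branching_of_mem_children (hv : v ≠ r) (hu : u ∈ hT.children r v) :
    hT.branching r u = (G.degree v - 1) * hT.branching r v := by
  obtain ⟨h, hu⟩ := hT.mem_children.mp hu
  rw [branching, hT.path_eq_concat h hu, Walk.interiorVertices_concat h hu hv,
    prod_insert (by simp [Walk.mem_interiorVertices]), branching]

theorem exists_mem_leavesBelow_card_mul_branching_le {v : V} (hv : v ≠ r) :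
    ∃ ℓ ∈ hT.leavesBelow r v, #(hT.leavesBelow r v) * hT.branching r v ≤ hT.branching r ℓ := by
  by_cases hleaf : G.degree v = 1
  · exact ⟨v, by simp [hT.leavesBelow_eq_singleton hv hleaf]⟩
  have hpos : 0 < G.degree v :=
    G.degree_pos_iff_exists_adj v |>.mpr
      ⟨_, ((hT.path r v).adj_penultimate (Walk.not_nil_of_ne hv.symm)).symm⟩
  have IH : ∀ u ∈ hT.children r v, ∃ ℓ ∈ hT.leavesBelow r u,
      #(hT.leavesBelow r u) * hT.branching r u ≤ hT.branching r ℓ := fun u hu =>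
    exists_mem_leavesBelow_card_mul_branching_le (hT.ne_of_mem_children hu)
  choose! ℓ hℓ hbound using IH
  have hC : (hT.children r v).Nonempty := card_pos.mp (by rw [hT.card_children hv]; omega)
  obtain ⟨u₀, hu₀, hmax⟩ := (hT.children r v).exists_max_image (fun u => hT.branching r (ℓ u)) hC
  refine ⟨ℓ u₀, hT.leavesBelow_subset_of_mem_children hu₀ (hℓ u₀ hu₀),
    Nat.le_of_mul_le_mul_left ?_ (by omega : 0 < G.degree v - 1)⟩
  calc (G.degree v - 1) * (#(hT.leavesBelow r v) * hT.branching r v)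
      ≤ (G.degree v - 1) * ((∑ u ∈ hT.children r v, #(hT.leavesBelow r u)) * hT.branching r v) := by
        gcongr
        exact (card_le_card (hT.leavesBelow_subset_biUnion_children hleaf)).trans card_biUnion_le
    _ = ∑ u ∈ hT.children r v, #(hT.leavesBelow r u) * hT.branching r u := by
        rw [sum_mul, mul_sum]
        exact sum_congr rfl fun u hu => by rw [hT.branching_of_mem_children hv hu]; ring
    _ ≤ ∑ u ∈ hT.children r v, hT.branching r (ℓ u) := sum_le_sum hbound
    _ ≤ #(hT.children r v) * hT.branching r (ℓ u₀) := by
        simpa using sum_le_card_nsmul _ _ _ hmax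
    _ = (G.degree v - 1) * hT.branching r (ℓ u₀) := by rw [hT.card_children hv]
termination_by Fintype.card V - (hT.path r v).length
decreasing_by
  have := (hT.isPath_path r u).length_lt
  have := hT.length_path_lt_of_mem_children hu
  omega

theorem two_le_degree_of_adj_of_degree_eq_one (hT : G.IsTree) (h3 : 3 ≤ Fintype.card V)
    (hr : G.degree r = 1) (hc : G.Adj r v) : 2 ≤ G.degree v := by
  obtain ⟨x, -, hx⟩ := exists_mem_notMem_of_card_lt_card (s := {r, v}) (t := univ)
    (by rw [card_univ]; exact card_le_two.trans_lt (by omega))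
  simp only [mem_insert, mem_singleton, not_or] at hx
  exact (hT.isPath_path r x).two_le_degree_of_mem_support
    (hT.mem_support_path_of_degree_eq_one hr hc hx.1) hc.ne' (Ne.symm hx.2)

theorem branching_eq_one_of_adj (hc : G.Adj r v) : hT.branching r v = 1 := by
  rw [branching, ← hT.eq_path (Walk.IsPath.of_adj hc)]
  simp [Walk.interiorVertices]

theorem leafFinset_subset_insert_leavesBelow (hr : G.degree r = 1) (hc : G.Adj r v) :
    G.leafFinset ⊆ insert r (hT.leavesBelow r v) := fun w hw => by
  rw [mem_insert, mem_leavesBelow]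
  by_cases hwr : w = r
  · exact Or.inl hwr
  · exact Or.inr ⟨mem_leafFinset.mp hw, hT.mem_support_path_of_degree_eq_one hr hc hwr⟩

theorem exists_card_leafFinset_le_prod_degree (h3 : 3 ≤ Fintype.card V) (hr : G.degree r = 1) :
    ∃ ℓ, G.degree ℓ = 1 ∧ #G.leafFinset ≤ ∏ x ∈ (hT.path r ℓ).interiorVertices, G.degree x := by
  obtain ⟨c, hc, -⟩ := degree_eq_one_iff_existsUnique_adj.mp hr
  obtain ⟨ℓ, hℓ, hbound⟩ := hT.exists_mem_leavesBelow_card_mul_branching_le hc.ne'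
  obtain ⟨hℓ, hcℓ⟩ := hT.mem_leavesBelow.mp hℓ
  have hc2 := hT.two_le_degree_of_adj_of_degree_eq_one h3 hr hc
  have hcint : c ∈ (hT.path r ℓ).interiorVertices :=
    Walk.mem_interiorVertices.mpr ⟨hcℓ, hc.ne', by rintro rfl; omega⟩
  refine ⟨ℓ, hℓ, ?_⟩
  calc #G.leafFinset ≤ #(hT.leavesBelow r c) + 1 :=
        (card_le_card (hT.leafFinset_subset_insert_leavesBelow hr hc)).trans (card_insert_le _ _)
    _ ≤ hT.branching r ℓ + 1 := by simpa [hT.branching_eq_one_of_adj hc] using hbound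
    _ ≤ ∏ x ∈ (hT.path r ℓ).interiorVertices, G.degree x :=
        (hT.isPath_path r ℓ).prod_degree_sub_one_add_one_le ⟨c, hcint⟩

theorem card_leafFinset_le_exp (h3 : 3 ≤ Fintype.card V) (hr : G.degree r = 1) {M : ℝ}
    (hM : ∀ ℓ, G.degree ℓ = 1 → ∑ x ∈ (hT.path r ℓ).interiorVertices, (G.degree x : ℝ) ≤ M) :
    (#G.leafFinset : ℝ) ≤ Real.exp (M / Real.exp 1) := by
  obtain ⟨ℓ, hℓ, hL⟩ := hT.exists_card_leafFinset_le_prod_degree h3 hr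
  calc (#G.leafFinset : ℝ) ≤ ∏ x ∈ (hT.path r ℓ).interiorVertices, (G.degree x : ℝ) := by
        exact_mod_cast hL
    _ ≤ Real.exp ((∑ x ∈ (hT.path r ℓ).interiorVertices, (G.degree x : ℝ)) / Real.exp 1) :=
        Real.prod_le_exp_sum_div_exp fun _ _ => Nat.cast_nonneg _
    _ ≤ Real.exp (M / Real.exp 1) := by gcongr; exact hM ℓ hℓ

theorem card_le_sum_card_interiorVertices (hr : G.degree r = 1) :
    Fintype.card V ≤ ∑ ℓ ∈ G.leafFinset, (#(hT.path r ℓ).interiorVertices + 1) := by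
  have hcover : (univ : Finset V) ⊆
      G.leafFinset.biUnion fun ℓ => insert ℓ (hT.path r ℓ).interiorVertices := by
    intro v _
    by_cases hv : v = r
    · exact mem_biUnion.mpr ⟨r, mem_leafFinset.mpr hr, hv ▸ mem_insert_self _ _⟩
    obtain ⟨ℓ, hℓ, -⟩ := hT.exists_mem_leavesBelow_card_mul_branching_le hv
    obtain ⟨hℓ, hvℓ⟩ := hT.mem_leavesBelow.mp hℓ
    refine mem_biUnion.mpr ⟨ℓ, mem_leafFinset.mpr hℓ, ?_⟩
    rw [mem_insert, Walk.mem_interiorVertices]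
    by_cases hvℓ' : v = ℓ
    · exact Or.inl hvℓ'
    · exact Or.inr ⟨hvℓ, hv, hvℓ'⟩
  calc Fintype.card V = #(univ : Finset V) := rfl
    _ ≤ _ := card_le_card hcover
    _ ≤ _ := card_biUnion_le
    _ ≤ _ := sum_le_sum fun ℓ _ => card_insert_le _ _

theorem card_le_card_leafFinset_mul (hr : G.degree r = 1) {M : ℝ}
    (hM : ∀ ℓ, G.degree ℓ = 1 → ∑ x ∈ (hT.path r ℓ).interiorVertices, (G.degree x : ℝ) ≤ M) :
    (Fintype.card V : ℝ) ≤ #G.leafFinset * (M / 2 + 1) := by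
  have hint : ∀ ℓ ∈ G.leafFinset, 2 * (#(hT.path r ℓ).interiorVertices : ℝ) ≤ M := fun ℓ hℓ =>
    le_trans (by exact_mod_cast (hT.isPath_path r ℓ).two_mul_card_interiorVertices_le)
      (hM ℓ (mem_leafFinset.mp hℓ))
  calc (Fintype.card V : ℝ)
      ≤ ∑ ℓ ∈ G.leafFinset, ((#(hT.path r ℓ).interiorVertices : ℝ) + 1) := by
        exact_mod_cast hT.card_le_sum_card_interiorVertices hr
    _ ≤ ∑ ℓ ∈ G.leafFinset, (M / 2 + 1) := sum_le_sum fun ℓ hℓ => by linarith [hint ℓ hℓ]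
    _ = #G.leafFinset * (M / 2 + 1) := by rw [sum_const, nsmul_eq_mul]

end IsTree

end SimpleGraph

theorem stmt5_general {V : Type*} [Fintype V] [DecidableEq V] (G : SimpleGraph V)
    [DecidableRel G.Adj] (hT : G.IsTree) (h3 : 3 ≤ Fintype.card V) (M : ℝ)
    (hpaths : ∀ ⦃a b : V⦄ (p : G.Walk a b), p.IsPath → G.degree a = 1 → G.degree b = 1 →
      ∑ v ∈ p.support.toFinset \ {a, b}, (G.degree v : ℝ) ≤ M) :
    (Fintype.card V : ℝ) ≤ (M / 2 + 1) * Real.exp (M / Real.exp 1) := by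
  have : Nontrivial V := Fintype.one_lt_card_iff_nontrivial.mp (by omega)
  obtain ⟨r, hr⟩ := hT.exists_vert_degree_one_of_nontrivial
  have hsum : ∀ ℓ, G.degree ℓ = 1 →
      ∑ x ∈ (hT.path r ℓ).interiorVertices, (G.degree x : ℝ) ≤ M := fun ℓ hℓ =>
    hpaths _ (hT.isPath_path r ℓ) hr hℓ
  have hM : 0 ≤ M := (sum_nonneg fun _ _ => Nat.cast_nonneg _).trans (hsum r hr)
  calc (Fintype.card V : ℝ) ≤ #G.leafFinset * (M / 2 + 1) := hT.card_le_card_leafFinset_mul hr hsum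
    _ ≤ Real.exp (M / Real.exp 1) * (M / 2 + 1) := by
        gcongr
        exact hT.card_leafFinset_le_exp h3 hr hsum
    _ = (M / 2 + 1) * Real.exp (M / Real.exp 1) := mul_comm _ _

/-- A finite tree with at least three vertices, in which the interior degree sum of every
leaf-to-leaf path is at most `M`, has at most `(M/2 + 1) · e^(M/e)` vertices. -/
theorem stmt5 {V : Type*} [Fintype V] [DecidableEq V] (G : SimpleGraph V)
    [DecidableRel G.Adj] (hT : G.IsTree) (h3 : 3 ≤ Fintype.card V) (M : ℝ) (hM : 0 < M)
    (hpaths : ∀ ⦃a b : V⦄ (p : G.Walk a b), p.IsPath → G.degree a = 1 → G.degree b = 1 →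
      ∑ v ∈ p.support.toFinset \ {a, b}, (G.degree v : ℝ) ≤ M) :
    (Fintype.card V : ℝ) ≤ (M / 2 + 1) * Real.exp (M / Real.exp 1) :=
  stmt5_general G hT h3 M hpaths
end

section
/- Let W be a finite connected graph satisfying: (1) every block of W is a cycle or a cut edge, and (2) every cut vertex of W belongs to exactly two blocks and separates W into two parts each containing an odd number of edges lying in cyclic blocks. If the block graph B(W) is a tree with at least three vertices, then every leaf of B(W) is an odd cycle. -/
/-!
Let `B` be a leaf of the block graph, `C` its unique neighbour and `v ∈ B ∩ C`. Every other
block meets `B` at most in `v`, so a walk entering `B` from outside passes through `v`; hence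
`v` is a cut vertex. As `v` lies only in `B` and `C`, the vertices outside `B` stay connected
in `W - v`, so the side of the separation at `v` that meets `B` is exactly `B \ {v}`, and
condition (2) says that `B` spans an odd number of cyclic edges. Then `B` is a cycle, and a
cycle has as many edges as vertices.
-/

open SimpleGraph

variable {V : Type*}

/-- A set of vertices inducing a connected subgraph with no cut vertex
(single vertices allowed). -/
def IsBiconn (G : SimpleGraph V) (B : Set V) : Prop :=
  (SimpleGraph.induce B G).Connected ∧
    ∀ v ∈ B, B = {v} ∨ (SimpleGraph.induce (B \ {v}) G).Connected

/-- A block of `G`: a maximal biconnected set of vertices. -/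
def IsBlock (G : SimpleGraph V) (B : Set V) : Prop :=
  IsBiconn G B ∧ ∀ B' : Set V, IsBiconn G B' → B ⊆ B' → B = B'

/-- The block graph of `G`: vertices are the blocks of `G`, two blocks adjacent
iff they share a vertex. -/
def BlockGraph (G : SimpleGraph V) : SimpleGraph {B : Set V // IsBlock G B} where
  Adj B B' := B ≠ B' ∧ (B.1 ∩ B'.1).Nonempty
  symm := by
    constructor
    intro a b h
    exact ⟨h.1.symm, by rw [Set.inter_comm]; exact h.2⟩
  loopless := ⟨fun a h => h.1 rfl⟩

/-- A cut vertex: its removal disconnects the (connected) graph. -/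
def IsCutVertex (G : SimpleGraph V) (v : V) : Prop :=
  G.Connected ∧ ¬ (SimpleGraph.induce ({v}ᶜ : Set V) G).Connected

/-- The set `B` induces a cycle: at least three vertices, connected, every vertex having
exactly two neighbours inside `B`. -/
def IsCycleSet (G : SimpleGraph V) (B : Set V) : Prop :=
  3 ≤ B.ncard ∧ (SimpleGraph.induce B G).Connected ∧
    ∀ v ∈ B, (G.neighborSet v ∩ B).ncard = 2

/-- The set `B` consists of the two endpoints of a single edge. -/
def IsEdgeBlock (G : SimpleGraph V) (B : Set V) : Prop :=
  ∃ a b : V, a ≠ b ∧ G.Adj a b ∧ B = {a, b}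

/-- The edges of `G` lying in cyclic blocks. -/
def cyclicEdges (G : SimpleGraph V) : Set (Sym2 V) :=
  {e | e ∈ G.edgeSet ∧ ∃ B : Set V, IsBlock G B ∧ IsCycleSet G B ∧ ∀ x ∈ e, x ∈ B}

/-- Condition (2): every cut vertex belongs to exactly two blocks and separates the graph
into two parts, each containing an odd number of edges lying in cyclic blocks. -/
def CutVertexCondition (G : SimpleGraph V) : Prop :=
  ∀ v : V, IsCutVertex G v →
    {B : Set V | IsBlock G B ∧ v ∈ B}.ncard = 2 ∧
    ∃ A₁ A₂ : Set V, A₁ ∪ A₂ = {v}ᶜ ∧ Disjoint A₁ A₂ ∧ A₁.Nonempty ∧ A₂.Nonempty ∧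
      (∀ a ∈ A₁, ∀ b ∈ A₂, ¬ G.Adj a b) ∧
      Odd {e | e ∈ cyclicEdges G ∧ ∀ x ∈ e, x ∈ insert v A₁}.ncard ∧
      Odd {e | e ∈ cyclicEdges G ∧ ∀ x ∈ e, x ∈ insert v A₂}.ncard

lemma Set.eq_or_eq_of_ncard_eq_two {α : Type*} {s : Set α} (h : s.ncard = 2) {x y z : α}
    (hx : x ∈ s) (hy : y ∈ s) (hxy : x ≠ y) (hz : z ∈ s) : z = x ∨ z = y := by
  have hs : s = {x, y} := (Set.eq_of_subset_of_ncard_le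
    (Set.insert_subset hx (Set.singleton_subset_iff.mpr hy)) (by rw [h, Set.ncard_pair hxy])
    (Set.finite_of_ncard_pos (by omega))).symm
  simpa [hs] using hz

namespace SimpleGraph

variable {G : SimpleGraph V}

lemma Connected.exists_walk_support_subset {s : Set V} (h : (G.induce s).Connected)
    {a b : V} (ha : a ∈ s) (hb : b ∈ s) : ∃ p : G.Walk a b, ∀ x ∈ p.support, x ∈ s := by
  obtain ⟨p⟩ := h.preconnected ⟨a, ha⟩ ⟨b, hb⟩
  refine ⟨p.map (Embedding.induce s).toHom, fun x hx => ?_⟩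
  obtain ⟨y, -, rfl⟩ := List.mem_map.mp (Walk.support_map _ p ▸ hx)
  exact y.2

lemma Walk.mem_of_forall_support_mem_union {A₁ A₂ : Set V}
    (hsep : ∀ a ∈ A₁, ∀ b ∈ A₂, ¬ G.Adj a b) {a b : V} (p : G.Walk a b)
    (hp : ∀ x ∈ p.support, x ∈ A₁ ∪ A₂) (ha : a ∈ A₁) : b ∈ A₁ := by
  induction p with
  | nil => exact ha
  | cons hadj q ih =>
    refine ih (fun x hx => hp x (List.mem_cons_of_mem _ hx)) ?_
    exact (hp _ (List.mem_cons_of_mem _ q.start_mem_support)).resolve_right (hsep _ ha _ · hadj)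

lemma isBiconn_pair {a b : V} (h : G.Adj a b) : IsBiconn G {a, b} := by
  refine ⟨induce_pair_connected_of_adj h, ?_⟩
  rintro v (rfl | rfl)
  · rw [Set.pair_sdiff_left h.ne, induce_singleton_eq_top]
    exact .inr connected_top
  · rw [Set.pair_sdiff_right h.ne, induce_singleton_eq_top]
    exact .inr connected_top

lemma IsBiconn.induce_sdiff_singleton_connected {B : Set V} (hB : IsBiconn G B) {u w : V}
    (hw : w ∈ B) (hwu : w ≠ u) : (G.induce (B \ {u})).Connected := by
  by_cases hu : u ∈ B
  · exact (hB.2 u hu).resolve_left fun h => hwu (Set.mem_singleton_iff.mp (h ▸ hw))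
  · rw [Set.sdiff_singleton_eq_self hu]
    exact hB.1

lemma IsBiconn.exists_isBlock_superset [Finite V] {S : Set V} (h : IsBiconn G S) :
    ∃ B, IsBlock G B ∧ S ⊆ B := by
  obtain ⟨B, hB, hmax⟩ := Set.Finite.exists_maximalFor Set.ncard {B | IsBiconn G B ∧ S ⊆ B}
    (Set.toFinite _) ⟨S, h, subset_rfl⟩
  refine ⟨B, ⟨hB.1, fun B' hB' hBB' => ?_⟩, hB.2⟩
  exact Set.eq_of_subset_of_ncard_le hBB'
    (hmax ⟨hB', hB.2.trans hBB'⟩ (Set.ncard_le_ncard hBB')) (Set.toFinite _)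

lemma exists_isBlock_of_adj [Finite V] {a b : V} (h : G.Adj a b) :
    ∃ D, IsBlock G D ∧ a ∈ D ∧ b ∈ D := by
  obtain ⟨D, hD, hsub⟩ := (isBiconn_pair h).exists_isBlock_superset
  exact ⟨D, hD, hsub (by simp), hsub (by simp)⟩

/-- `B ∪ C` is biconnected: after deleting any vertex, `B` and `C` still share a vertex. -/
lemma IsBlock.eq_of_mem_inter {B C : Set V} (hB : IsBlock G B) (hC : IsBlock G C)
    {v w : V} (hv : v ∈ B ∩ C) (hw : w ∈ B ∩ C) (hvw : v ≠ w) : B = C := by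
  have hBC : IsBiconn G (B ∪ C) := by
    refine ⟨induce_union_connected hB.1.1.preconnected hC.1.1.preconnected ⟨v, hv⟩,
      fun u _ => .inr ?_⟩
    obtain ⟨x, hx, hxu⟩ : ∃ x ∈ B ∩ C, x ≠ u := by
      by_cases hvu : v = u
      · exact ⟨w, hw, hvu ▸ hvw.symm⟩
      · exact ⟨v, hv, hvu⟩
    rw [Set.union_sdiff_distrib]
    exact induce_union_connected
      (hB.1.induce_sdiff_singleton_connected hx.1 hxu).preconnected
      (hC.1.induce_sdiff_singleton_connected hx.2 hxu).preconnected ⟨x, ⟨hx.1, hxu⟩, hx.2, hxu⟩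
  have hCB : C ⊆ B := (hB.2 _ hBC Set.subset_union_left).symm ▸ Set.subset_union_right
  exact (hC.2 B hB.1 hCB).symm

structure IsPendantBlock (G : SimpleGraph V) (B : Set V) (v : V) : Prop where
  isBlock : IsBlock G B
  mem : v ∈ B
  eq_of_mem : ∀ D, IsBlock G D → D ≠ B → ∀ w ∈ D, w ∈ B → w = v

namespace IsPendantBlock

variable {B : Set V} {v : V}

lemma mem_support_of_walk [Finite V] (hB : IsPendantBlock G B v) {x z : V} (p : G.Walk x z)
    (hx : x ∉ B) (hz : z ∈ B) : v ∈ p.support := by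
  induction p with
  | nil => exact absurd hz hx
  | @cons s t _ hadj q ih =>
    by_cases ht : t ∈ B
    · obtain ⟨D, hD, hsD, htD⟩ := exists_isBlock_of_adj hadj
      rw [← hB.eq_of_mem D hD (fun h => hx (h ▸ hsD)) t htD ht]
      exact List.mem_cons_of_mem _ q.start_mem_support
    · exact List.mem_cons_of_mem _ (ih ht hz)

lemma not_connected_induce_compl [Finite V] (hB : IsPendantBlock G B v) {b x : V} (hb : b ∈ B)
    (hbv : b ≠ v) (hx : x ∉ B) : ¬ (G.induce ({v}ᶜ : Set V)).Connected := by
  intro hconn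
  have hxv : x ≠ v := fun h => hx (h ▸ hB.mem)
  obtain ⟨p, hp⟩ := hconn.exists_walk_support_subset (s := {v}ᶜ) hxv hbv
  exact hp v (hB.mem_support_of_walk p hx hb) rfl

/-- The first edge of a path from `v` to `x` lies in `C`: were it in `B`, the rest of the path
would enter `B` from outside avoiding `v`. -/
lemma exists_walk_not_mem_support [Finite V] (hB : IsPendantBlock G B v) (hconn : G.Connected)
    {C : Set V} (hC : IsBlock G C) (hBC : ∀ D, IsBlock G D → v ∈ D → D = B ∨ D = C)
    {c : V} (hc : c ∈ C) (hcv : c ≠ v) {x : V} (hx : x ∉ B) :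
    ∃ p : G.Walk x c, v ∉ p.support := by
  obtain ⟨p, hp⟩ := hconn.exists_isPath v x
  cases p with
  | nil => exact absurd hB.mem hx
  | @cons _ z _ hadj r =>
    have hvr : v ∉ r.support := ((Walk.cons_isPath_iff hadj r).1 hp).2
    have hzv : z ≠ v := hadj.ne'
    obtain ⟨D, hD, hvD, hzD⟩ := exists_isBlock_of_adj hadj
    rcases hBC D hD hvD with rfl | rfl
    · exact absurd (hB.mem_support_of_walk r.reverse hx hzD) (by simpa using hvr)
    · obtain ⟨q, hq⟩ := (hC.1.induce_sdiff_singleton_connected hc hcv).exists_walk_support_subset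
        ⟨hzD, hzv⟩ ⟨hc, hcv⟩
      refine ⟨r.reverse.append q, ?_⟩
      rw [Walk.mem_support_append_iff, Walk.support_reverse, List.mem_reverse]
      exact fun h => h.elim hvr fun h => (hq v h).2 rfl

lemma insert_eq_of_separation (hB : IsPendantBlock G B v) {c : V}
    (hreach : ∀ x ∉ B, ∃ p : G.Walk x c, v ∉ p.support)
    {A A' : Set V} (hunion : A ∪ A' = {v}ᶜ) (hdisj : Disjoint A A')
    (hsep : ∀ a ∈ A, ∀ a' ∈ A', ¬ G.Adj a a') (hA' : A'.Nonempty)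
    {b : V} (hbB : b ∈ B) (hbA : b ∈ A) : insert v A = B := by
  have hne : ∀ x ∈ A ∪ A', x ≠ v := fun x hx => by rw [hunion] at hx; exact hx
  have hmem : ∀ {x y : V} (p : G.Walk x y), v ∉ p.support → ∀ z ∈ p.support, z ∈ A ∪ A' :=
    fun p hp z hz => by rw [hunion]; exact fun h => hp (Set.mem_singleton_iff.mp h ▸ hz)
  have hsep' : ∀ a' ∈ A', ∀ a ∈ A, ¬ G.Adj a' a := fun a' ha' a ha h => hsep a ha a' ha' h.symm
  have hBA : B \ {v} ⊆ A := by
    intro y hy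
    have hbv := hne b (.inl hbA)
    obtain ⟨p, hp⟩ := (hB.isBlock.1.induce_sdiff_singleton_connected hbB hbv
      ).exists_walk_support_subset ⟨hbB, hbv⟩ hy
    exact p.mem_of_forall_support_mem_union hsep (hmem p fun h => (hp v h).2 rfl) hbA
  have hcA' : c ∈ A' := by
    obtain ⟨a, ha⟩ := hA'
    have haB : a ∉ B := fun h => hdisj.ne_of_mem (hBA ⟨h, hne a (.inr ha)⟩) ha rfl
    obtain ⟨p, hp⟩ := hreach a haB
    exact p.mem_of_forall_support_mem_union hsep' (Set.union_comm A A' ▸ hmem p hp) ha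
  suffices hAB : A = B \ {v} by
    rw [hAB, Set.insert_sdiff_singleton, Set.insert_eq_of_mem hB.mem]
  refine Set.Subset.antisymm (fun x hx => ⟨by_contra fun hxB => ?_, hne x (.inl hx)⟩) hBA
  obtain ⟨p, hp⟩ := hreach x hxB
  exact hdisj.ne_of_mem (p.mem_of_forall_support_mem_union hsep (hmem p hp) hx) hcA' rfl

end IsPendantBlock

lemma ncard_edges_subset_eq_ncard_of_two_regular [Fintype V] {B : Set V}
    (h : ∀ u ∈ B, (G.neighborSet u ∩ B).ncard = 2) :
    {e | e ∈ G.edgeSet ∧ ∀ x ∈ e, x ∈ B}.ncard = B.ncard := by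
  classical
  set H := (G.induce B).spanningCoe
  have hedges : H.edgeSet = {e | e ∈ G.edgeSet ∧ ∀ x ∈ e, x ∈ B} := by
    ext e
    induction e using Sym2.ind
    simp [H]
  have hdeg : ∀ u, H.degree u = if u ∈ B then 2 else 0 := by
    intro u
    rw [← card_neighborSet_eq_degree, ← Nat.card_eq_fintype_card, Nat.card_coe_set_eq]
    split_ifs with hu
    · rw [← h u hu]
      congr 1
      ext w
      simp [H, hu, and_comm]
    · rw [Set.ncard_eq_zero]
      ext w
      simp [H, hu]
  have hsum := H.sum_degrees_eq_twice_card_edges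
  rw [Finset.sum_congr rfl fun u _ => hdeg u, Finset.sum_ite, Finset.sum_const_zero,
    Finset.sum_const, smul_eq_mul, add_zero, Set.filter_mem_univ_eq_toFinset] at hsum
  rw [← hedges, ← coe_edgeFinset, Set.ncard_coe_finset, Set.ncard_eq_toFinset_card']
  omega

lemma one_lt_ncard_of_isEdgeBlock_or_isCycleSet {B : Set V}
    (h : IsEdgeBlock G B ∨ IsCycleSet G B) : 1 < B.ncard := by
  rcases h with ⟨a, b, hab, -, rfl⟩ | hcyc
  · rw [Set.ncard_pair hab]
    omega
  · exact lt_of_lt_of_le (by norm_num) hcyc.1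

lemma IsBlock.isCycleSet_of_mem_cyclicEdges {B : Set V} (hB : IsBlock G B) {e : Sym2 V}
    (he : e ∈ cyclicEdges G) (heB : ∀ x ∈ e, x ∈ B) : IsCycleSet G B := by
  induction e using Sym2.ind with
  | _ p q =>
    obtain ⟨hpq, D, hD, hDcyc, hDe⟩ := he
    have hp : p ∈ D ∩ B := ⟨hDe p (Sym2.mem_mk_left p q), heB p (Sym2.mem_mk_left p q)⟩
    have hq : q ∈ D ∩ B := ⟨hDe q (Sym2.mem_mk_right p q), heB q (Sym2.mem_mk_right p q)⟩
    exact hD.eq_of_mem_inter hB hp hq (G.ne_of_adj hpq) ▸ hDcyc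

/-- A cyclic edge inside the block `B` makes `B` a cycle, which has as many edges as
vertices. -/
lemma IsBlock.isCycleSet_and_odd_ncard [Fintype V] {B : Set V} (hB : IsBlock G B)
    (hodd : Odd {e | e ∈ cyclicEdges G ∧ ∀ x ∈ e, x ∈ B}.ncard) :
    IsCycleSet G B ∧ Odd B.ncard := by
  obtain ⟨e, he, heB⟩ := Set.nonempty_of_ncard_ne_zero hodd.pos.ne'
  have hcyc := hB.isCycleSet_of_mem_cyclicEdges he heB
  have hedges : {e | e ∈ cyclicEdges G ∧ ∀ x ∈ e, x ∈ B} =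
      {e | e ∈ G.edgeSet ∧ ∀ x ∈ e, x ∈ B} :=
    Set.ext fun e => ⟨fun h => ⟨h.1.1, h.2⟩, fun h => ⟨⟨h.1, B, hB, hcyc, h.2⟩, h.2⟩⟩
  rw [hedges, ncard_edges_subset_eq_ncard_of_two_regular hcyc.2.2] at hodd
  exact ⟨hcyc, hodd⟩

lemma isPendantBlock_of_adj_eq_singleton {B C : {B : Set V // IsBlock G B}}
    (hC : {B' | (BlockGraph G).Adj B B'} = {C}) {v : V} (hvB : v ∈ B.1) (hvC : v ∈ C.1) :
    IsPendantBlock G B.1 v := by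
  refine ⟨B.2, hvB, fun D hD hDB w hwD hwB => by_contra fun hwv => ?_⟩
  have hDC : (⟨D, hD⟩ : {B : Set V // IsBlock G B}) = C :=
    hC.le ⟨fun h => hDB (congrArg Subtype.val h).symm, w, hwB, hwD⟩
  have hBC : B ≠ C := (hC.ge rfl : (BlockGraph G).Adj B C).1
  exact hBC (Subtype.ext (B.2.eq_of_mem_inter C.2 ⟨hvB, hvC⟩ ⟨hwB, hDC ▸ hwD⟩ (Ne.symm hwv)))

end SimpleGraph

theorem stmt11_general [Fintype V] (W : SimpleGraph V) (hconn : W.Connected)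
    (hblocks : ∀ B : Set V, IsBlock W B → IsEdgeBlock W B ∨ IsCycleSet W B)
    (hcut : CutVertexCondition W) :
    ∀ B : {B : Set V // IsBlock W B},
      {B' : {B : Set V // IsBlock W B} | (BlockGraph W).Adj B B'}.ncard = 1 →
      IsCycleSet W B.1 ∧ Odd B.1.ncard := by
  intro B hleaf
  obtain ⟨C, hC⟩ := Set.ncard_eq_one.mp hleaf
  obtain ⟨hBC, v, hvB, hvC⟩ : (BlockGraph W).Adj B C := hC.ge rfl
  have hpend := isPendantBlock_of_adj_eq_singleton hC hvB hvC
  obtain ⟨b, hb, hbv⟩ :=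
    Set.exists_ne_of_one_lt_ncard (one_lt_ncard_of_isEdgeBlock_or_isCycleSet (hblocks _ B.2)) v
  obtain ⟨c, hc, hcv⟩ :=
    Set.exists_ne_of_one_lt_ncard (one_lt_ncard_of_isEdgeBlock_or_isCycleSet (hblocks _ C.2)) v
  have hCB : C.1 ≠ B.1 := fun h => hBC (Subtype.ext h).symm
  have hcB : c ∉ B.1 := fun h => hcv (hpend.eq_of_mem C.1 C.2 hCB c hc h)
  obtain ⟨htwo, A₁, A₂, hunion, hdisj, hA₁, hA₂, hsep, hodd₁, hodd₂⟩ :=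
    hcut v ⟨hconn, hpend.not_connected_induce_compl hb hbv hcB⟩
  have hreach : ∀ x ∉ B.1, ∃ p : W.Walk x c, v ∉ p.support := fun x hx =>
    hpend.exists_walk_not_mem_support hconn C.2 (fun D hD hvD =>
      Set.eq_or_eq_of_ncard_eq_two htwo ⟨B.2, hvB⟩ ⟨C.2, hvC⟩ hCB.symm ⟨hD, hvD⟩) hc hcv hx
  rcases (hunion.ge hbv : b ∈ A₁ ∪ A₂) with hbA | hbA
  · rw [hpend.insert_eq_of_separation hreach hunion hdisj hsep hA₂ hb hbA] at hodd₁
    exact B.2.isCycleSet_and_odd_ncard hodd₁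
  · rw [hpend.insert_eq_of_separation hreach (Set.union_comm A₁ A₂ ▸ hunion) hdisj.symm
      (fun a ha a' ha' h => hsep a' ha' a ha h.symm) hA₁ hb hbA] at hodd₂
    exact B.2.isCycleSet_and_odd_ncard hodd₂

/-- If every block of the finite connected graph `W` is a cycle or a cut edge, every cut
vertex satisfies the separation condition, and the block graph is a tree with at least
three vertices, then every leaf of the block graph is an odd cycle. -/
theorem stmt11 [Fintype V] (W : SimpleGraph V) (hconn : W.Connected)
    (hblocks : ∀ B : Set V, IsBlock W B → IsEdgeBlock W B ∨ IsCycleSet W B)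
    (hcut : CutVertexCondition W)
    (htree : (BlockGraph W).IsTree)
    (h3 : 3 ≤ {B : Set V | IsBlock W B}.ncard) :
    ∀ B : {B : Set V // IsBlock W B},
      {B' : {B : Set V // IsBlock W B} | (BlockGraph W).Adj B B'}.ncard = 1 →
      IsCycleSet W B.1 ∧ Odd B.1.ncard :=
  stmt11_general W hconn hblocks hcut
end
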